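/- Let p be a prime, F a finite field of characteristic p, and G a finite group. If ρ̄ : G → GL_2(F) is a homomorphism whose image has order prime to p, then there exists a homomorphism ρ̃ : G → GL_2(W(F)) to the Witt vectors of F such that the reduction of ρ̃ modulo p equals ρ̄, and the reduction map induces an isomorphism from ρ̃(G) onto ρ̄(G). -/

import Mathlib

/-!
For `n ≥ 1` the reduction `GL₂(W_{n+1}(F)) → GL₂(W_n(F))` is surjective, and its kernel consists
of matrices `1 + X` with entries of `X` in a square-zero ideal killed by `p`, so `(1 + X) ^ p = 1`:
the kernel is a `p`-group. By Schur–Zassenhaus, a homomorphism from a group of order prime to `p`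
therefore lifts through each reduction, so the inclusion of `H = ρ̄(G)` into `GL₂(F) ≅ GL₂(W_1(F))`
lifts to a compatible family `H → GL₂(W_n(F))`, which glues to `H → GL₂(W(F))`. Precomposing with
`G ↠ H` gives `ρ̃`; its reduction is injective on its image because `ρ̃` factors through `H`.
-/

open Matrix (GeneralLinearGroup)

/-- A complement of the `p`-group `ker π` in `π⁻¹(φ(H))` (Schur–Zassenhaus) maps isomorphically
onto `φ(H)`. -/
theorem MonoidHom.exists_lift_of_isPGroup_ker {p : ℕ} [Fact p.Prime]
    {H Γ Γ' : Type*} [Group H] [Group Γ] [Group Γ'] [Finite Γ']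
    (hH : (Nat.card H).Coprime p) (π : Γ' →* Γ) (hπ : Function.Surjective π)
    (hker : IsPGroup p π.ker) (φ : H →* Γ) : ∃ φ' : H →* Γ', π.comp φ' = φ := by
  set P := φ.range.comap π
  set f := π.comp P.subtype
  have hrange : f.range = φ.range := by
    rw [MonoidHom.range_comp, Subgroup.range_subtype, Subgroup.map_comap_eq_self_of_surjective hπ]
  have hf : IsPGroup p f.ker := by
    rw [← MonoidHom.comap_ker]
    exact hker.comap_of_injective P.subtype P.subtype_injective
  obtain ⟨k, hk⟩ := hf.exists_card_eq
  have hcop : (Nat.card f.ker).Coprime f.ker.index := by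
    rw [Subgroup.index_ker, hrange, hk]
    exact (Nat.Coprime.coprime_dvd_left (Subgroup.card_range_dvd φ) hH).symm.pow_left k
  obtain ⟨C, hC⟩ := Subgroup.exists_right_complement'_of_coprime hcop
  let e : f.range ≃* C :=
    (QuotientGroup.quotientKerEquivRange f).symm.trans hC.symm.QuotientMulEquiv
  have he : ∀ x, f (e x) = x := by
    intro x
    have hmk : ((e x : P) : P ⧸ f.ker) = (QuotientGroup.quotientKerEquivRange f).symm x :=
      Subgroup.IsComplement.quotientGroupMk_leftQuotientEquiv hC.symm _
    exact congrArg Subtype.val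
      ((congrArg (QuotientGroup.quotientKerEquivRange f) hmk).trans (MulEquiv.apply_symm_apply _ x))
  refine ⟨(P.subtype.comp C.subtype).comp (e.toMonoidHom.comp
    (φ.codRestrict f.range fun h => hrange ▸ ⟨h, rfl⟩)), ?_⟩
  ext h
  exact he _

theorem MonoidHom.exists_compatible_lifts_of_isPGroup_ker {p : ℕ} [Fact p.Prime]
    {H : Type*} [Group H] (hH : (Nat.card H).Coprime p)
    {Γ : ℕ → Type*} [∀ n, Group (Γ n)] [∀ n, Finite (Γ n)] (π : ∀ n, Γ (n + 1) →* Γ n)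
    (hπ : ∀ n, Function.Surjective (π n)) (hker : ∀ n, IsPGroup p (π n).ker) (φ₀ : H →* Γ 0) :
    ∃ φ : ∀ n, H →* Γ n, φ 0 = φ₀ ∧ ∀ n, (π n).comp (φ (n + 1)) = φ n := by
  choose lift hlift using fun n => MonoidHom.exists_lift_of_isPGroup_ker hH (π n) (hπ n) (hker n)
  exact ⟨fun n => Nat.rec (motive := fun n => H →* Γ n) φ₀ (fun n φn => lift n φn) n, rfl,
    fun n => hlift n _⟩

theorem RingHom.isLocalHom_of_surjective_of_isNilpotent {R S : Type*} [CommRing R] [CommRing S]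
    {f : R →+* S} (hf : Function.Surjective f) (hnil : ∀ x ∈ ker f, IsNilpotent x) :
    IsLocalHom f := by
  refine ⟨fun x hx => ?_⟩
  obtain ⟨y, hy⟩ := hf ↑hx.unit⁻¹
  have hxy : x * y - 1 ∈ ker f := by
    rw [mem_ker, map_sub, map_mul, hy, map_one, IsUnit.mul_val_inv, sub_self]
  have : IsUnit (x * y) := by simpa using (hnil _ hxy).isUnit_add_one
  exact isUnit_of_mul_isUnit_left this

namespace Matrix.GeneralLinearGroup

variable {n R S : Type*} [Fintype n] [DecidableEq n] [CommRing R] [CommRing S]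

theorem map_surjective {f : R →+* S} [IsLocalHom f] (hf : Function.Surjective f) :
    Function.Surjective (map (n := n) f) := by
  intro V
  obtain ⟨g, hg⟩ := hf.hasRightInverse
  set M : Matrix n n R := (V : Matrix n n S).map g
  have hM : M.map f = V := by
    simp only [M, Matrix.map_map, hg.comp_eq_id, Matrix.map_id]
  have hdet : IsUnit M.det := by
    apply isUnit_of_map_unit f
    rw [RingHom.map_det, RingHom.mapMatrix_apply, hM]
    exact V.isUnit.map Matrix.detMonoidHom
  exact ⟨M.nonsingInvUnit hdet, Units.ext hM⟩

theorem isPGroup_ker_map {p : ℕ} {f : R →+* S}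
    (hsq : ∀ x ∈ RingHom.ker f, ∀ y ∈ RingHom.ker f, x * y = 0)
    (hp : ∀ x ∈ RingHom.ker f, (p : R) * x = 0) : IsPGroup p (map (n := n) f).ker := by
  rintro ⟨U, hU : map f U = 1⟩
  refine ⟨1, Subtype.ext ?_⟩
  rw [pow_one, Subgroup.coe_pow, Subgroup.coe_one]
  set X : Matrix n n R := U - 1
  have hX : ∀ i j, X i j ∈ RingHom.ker f := fun i j => by
    have hU' : (U : Matrix n n R).map f = (1 : Matrix n n R).map f := by
      rw [Matrix.map_one _ f.map_zero f.map_one]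
      exact congrArg Units.val hU
    have hij := congrFun (congrFun hU' i) j
    simp only [Matrix.map_apply] at hij
    exact (map_sub f _ _).trans (sub_eq_zero.mpr hij)
  have hXX : X * X = 0 := by
    ext i j
    exact Finset.sum_eq_zero fun l _ => hsq _ (hX i l) _ (hX l j)
  have hpX : p • X = 0 := by
    ext i j
    simpa [nsmul_eq_mul] using hp _ (hX i j)
  have hpow : ∀ k : ℕ, (1 + X) ^ k = 1 + k • X := by
    intro k
    induction k with
    | zero => simp
    | succ k ih =>
      rw [pow_succ, ih, add_mul, one_mul, smul_mul_assoc, mul_add, mul_one, hXX, add_zero,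
        succ_nsmul]
      abel
  ext : 1
  rw [Units.val_pow_eq_pow_val, show (U : Matrix n n R) = 1 + X by rw [add_sub_cancel], hpow, hpX,
    add_zero]
  rfl

end Matrix.GeneralLinearGroup

namespace WittVector

variable {p : ℕ} [Fact p.Prime] {R : Type*} [CommRing R]

theorem coeff_mul_eq_zero_of_lt [CharP R p] {x y : WittVector p R} {m n : ℕ}
    (hx : ∀ i < m, x.coeff i = 0) (hy : ∀ i < n, y.coeff i = 0) {i : ℕ} (hi : i < m + n) :
    (x * y).coeff i = 0 := by
  rw [eq_iterate_verschiebung hx, eq_iterate_verschiebung hy, iterate_verschiebung_mul]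
  exact iterate_verschiebung_coeff_eq_zero _ hi

theorem eq_of_forall_truncate_eq {x y : WittVector p R}
    (h : ∀ n, truncate (n + 1) x = truncate (n + 1) y) : x = y := by
  ext n
  simpa only [coeff_truncate, Fin.val_last] using
    congrArg (TruncatedWittVector.coeff (Fin.last n)) (h n)

theorem exists_forall_truncate_eq (x : ∀ n, TruncatedWittVector p (n + 1) R)
    (hx : ∀ n, TruncatedWittVector.truncate (Nat.le_succ _) (x (n + 1)) = x n) :
    ∃ y : WittVector p R, ∀ n, truncate (n + 1) y = x n := by
  have hcoeff : ∀ k n (hkn : k ≤ n),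
      (x n).coeff ⟨k, Nat.lt_succ_of_le hkn⟩ = (x k).coeff (Fin.last k) := by
    intro k n hkn
    induction n, hkn using Nat.le_induction with
    | base => rfl
    | succ n hkn ih => rw [← ih, ← hx n, TruncatedWittVector.coeff_truncate]; rfl
  refine ⟨mk p fun n => (x n).coeff (Fin.last n), fun n => ?_⟩
  ext ⟨k, hk⟩
  rw [coeff_truncate, coeff_mk, hcoeff k n (Nat.le_of_lt_succ hk)]

theorem exists_lift_generalLinearGroup {G ι : Type*} [Group G] [Fintype ι] [DecidableEq ι]
    (φ : ∀ n, G →* GL ι (TruncatedWittVector p (n + 1) R))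
    (hφ : ∀ n, (GeneralLinearGroup.map (TruncatedWittVector.truncate (Nat.le_succ _))).comp
      (φ (n + 1)) = φ n) :
    ∃ φ' : G →* GL ι (WittVector p R),
      ∀ n, (GeneralLinearGroup.map (truncate (n + 1))).comp φ' = φ n := by
  choose y hy using fun g i j =>
    exists_forall_truncate_eq (fun n => (φ n g : Matrix ι ι (TruncatedWittVector p (n + 1) R)) i j)
      fun n => by rw [← hφ n]; rfl
  have hy' : ∀ g n, (Matrix.of (y g)).map (truncate (n + 1)) = φ n g :=
    fun g n => Matrix.ext fun i j => hy g i j n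
  have hext : ∀ A B : Matrix ι ι (WittVector p R),
      (∀ n, A.map (truncate (n + 1)) = B.map (truncate (n + 1))) → A = B :=
    fun A B h => Matrix.ext fun i j =>
      eq_of_forall_truncate_eq fun n => congrFun (congrFun (h n) i) j
  let σ : G →* Matrix ι ι (WittVector p R) :=
    { toFun g := Matrix.of (y g)
      map_one' := hext _ _ fun n => by
        rw [hy', map_one, Units.val_one, Matrix.map_one _ (map_zero _) (map_one _)]
      map_mul' g h := hext _ _ fun n => by
        rw [Matrix.map_mul, hy', hy', hy', map_mul, Units.val_mul] }
  exact ⟨σ.toHomUnits, fun n => MonoidHom.ext fun g => Units.ext (hy' g n)⟩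

end WittVector

namespace TruncatedWittVector

variable {p : ℕ} [Fact p.Prime] {R : Type*} [CommRing R]

section CharP

variable [CharP R p] {m : ℕ}

theorem mul_eq_zero_of_truncate_eq_zero {k n : ℕ} (hm : m ≤ k) (hn : n ≤ k) (hk : k ≤ m + n)
    {x y : TruncatedWittVector p k R} (hx : truncate hm x = 0) (hy : truncate hn y = 0) :
    x * y = 0 := by
  obtain ⟨x, rfl⟩ := WittVector.truncate_surjective p k R x
  obtain ⟨y, rfl⟩ := WittVector.truncate_surjective p k R y
  rw [truncate_wittVector_truncate, ← RingHom.mem_ker, WittVector.mem_ker_truncate] at hx hy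
  rw [← map_mul, ← RingHom.mem_ker, WittVector.mem_ker_truncate]
  exact fun i hi => WittVector.coeff_mul_eq_zero_of_lt hx hy (hi.trans_le hk)

theorem truncate_p_eq_zero {k : ℕ} (hk : 1 ≤ k) :
    truncate hk (p : TruncatedWittVector p k R) = 0 := by
  rw [map_natCast, ← map_natCast (WittVector.truncate 1), ← RingHom.mem_ker,
    WittVector.mem_ker_truncate]
  intro i hi
  rw [Nat.lt_one_iff.mp hi]
  exact WittVector.coeff_p_zero p R

theorem mul_eq_zero_of_mem_ker_truncate_succ (hm : 1 ≤ m)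
    {x y : TruncatedWittVector p (m + 1) R} (hx : x ∈ RingHom.ker (truncate (Nat.le_succ m)))
    (hy : y ∈ RingHom.ker (truncate (Nat.le_succ m))) : x * y = 0 :=
  mul_eq_zero_of_truncate_eq_zero _ _ (by omega) hx hy

theorem p_mul_eq_zero_of_mem_ker_truncate_succ {x : TruncatedWittVector p (m + 1) R}
    (hx : x ∈ RingHom.ker (truncate (Nat.le_succ m))) :
    (p : TruncatedWittVector p (m + 1) R) * x = 0 :=
  mul_eq_zero_of_truncate_eq_zero (Nat.le_add_left 1 m) _ (by omega) (truncate_p_eq_zero _) hx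

variable {ι : Type*} [Fintype ι] [DecidableEq ι]

theorem surjective_map_truncate_succ (hm : 1 ≤ m) :
    Function.Surjective (GeneralLinearGroup.map (n := ι)
      (truncate (p := p) (R := R) (Nat.le_succ m))) := by
  have hsurj := truncate_surjective (p := p) (R := R) (Nat.le_succ m)
  have := RingHom.isLocalHom_of_surjective_of_isNilpotent hsurj fun x hx =>
    ⟨2, by rw [sq]; exact mul_eq_zero_of_mem_ker_truncate_succ hm hx hx⟩
  exact GeneralLinearGroup.map_surjective hsurj

theorem isPGroup_ker_map_truncate_succ (hm : 1 ≤ m) :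
    IsPGroup p (GeneralLinearGroup.map (n := ι)
      (truncate (p := p) (R := R) (Nat.le_succ m))).ker :=
  GeneralLinearGroup.isPGroup_ker_map
    (fun _ hx _ hy => mul_eq_zero_of_mem_ker_truncate_succ hm hx hy) fun _ hx => p_mul_eq_zero_of_mem_ker_truncate_succ hx

end CharP

theorem ker_truncate_one : RingHom.ker (WittVector.truncate (p := p) (R := R) 1) =
    RingHom.ker (WittVector.constantCoeff (p := p) (R := R)) := by
  ext x
  rw [WittVector.mem_ker_truncate, RingHom.mem_ker]
  simp

noncomputable def oneEquiv : TruncatedWittVector p 1 R ≃+* R :=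
  (RingHom.quotientKerEquivOfSurjective (WittVector.truncate_surjective p 1 R)).symm.trans
    ((Ideal.quotEquivOfEq ker_truncate_one).trans
      (RingHom.quotientKerEquivOfSurjective (WittVector.constantCoeff_surjective p)))

theorem map_constantCoeff {ι : Type*} (A : Matrix ι ι (WittVector p R)) :
    A.map WittVector.constantCoeff = (A.map (WittVector.truncate 1)).map oneEquiv := by
  simp only [Matrix.map_map, Function.comp_def, oneEquiv, RingEquiv.trans_apply,
    RingHom.quotientKerEquivOfSurjective_symm_apply, Ideal.quotEquivOfEq_mk,
    RingHom.quotientKerEquivOfSurjective_apply_mk]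

end TruncatedWittVector

open TruncatedWittVector in
theorem teichmuller_lift_of_coprime_order_general (p : ℕ) [Fact p.Prime]
    (F : Type*) [Field F] [Fintype F] [CharP F p]
    (G : Type*) [Group G]
    (ρbar : G →* (Matrix (Fin 2) (Fin 2) F)ˣ)
    (hord : Nat.Coprime (Nat.card ρbar.range) p) :
    ∃ ρ' : G →* (Matrix (Fin 2) (Fin 2) (WittVector p F))ˣ,
      (∀ g : G, ((ρ' g : Matrix (Fin 2) (Fin 2) (WittVector p F))).map
          (WittVector.constantCoeff (p := p)) = (ρbar g : Matrix (Fin 2) (Fin 2) F)) ∧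
      ∀ g₁ g₂ : G,
        ((ρ' g₁ : Matrix (Fin 2) (Fin 2) (WittVector p F))).map
            (WittVector.constantCoeff (p := p)) =
          ((ρ' g₂ : Matrix (Fin 2) (Fin 2) (WittVector p F))).map
            (WittVector.constantCoeff (p := p)) → ρ' g₁ = ρ' g₂ := by
  obtain ⟨φ, hφ₀, hφ⟩ := MonoidHom.exists_compatible_lifts_of_isPGroup_ker
    (Γ := fun n => GL (Fin 2) (TruncatedWittVector p (n + 1) F)) hord
    (fun n => GeneralLinearGroup.map (truncate (Nat.le_succ (n + 1))))
    (fun n => surjective_map_truncate_succ n.succ_pos)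
    (fun n => isPGroup_ker_map_truncate_succ n.succ_pos)
    ((GeneralLinearGroup.map (oneEquiv (p := p)).symm.toRingHom).comp ρbar.range.subtype)
  obtain ⟨σ, hσ⟩ := WittVector.exists_lift_generalLinearGroup φ hφ
  have hred : ∀ h : ρbar.range,
      (σ h : Matrix (Fin 2) (Fin 2) (WittVector p F)).map WittVector.constantCoeff =
        ((h : (Matrix (Fin 2) (Fin 2) F)ˣ) : Matrix (Fin 2) (Fin 2) F) := by
    intro h
    have h₀ : (σ h : Matrix (Fin 2) (Fin 2) (WittVector p F)).map (WittVector.truncate 1) =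
        ((h : (Matrix (Fin 2) (Fin 2) F)ˣ) : Matrix (Fin 2) (Fin 2) F).map oneEquiv.symm :=
      congrArg Units.val ((DFunLike.congr_fun (hσ 0) h).trans (DFunLike.congr_fun hφ₀ h))
    simp [map_constantCoeff, h₀, Matrix.map_map, Function.comp_def]
  refine ⟨σ.comp ρbar.rangeRestrict, fun g => hred _, fun g₁ g₂ h => ?_⟩
  simp only [MonoidHom.comp_apply, hred] at h ⊢
  rw [show ρbar.rangeRestrict g₁ = ρbar.rangeRestrict g₂ from Subtype.ext (Units.ext h)]

/-- Teichmüller lifting: a two-dimensional representation of a finite group over a finite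
field `F` of characteristic `p` whose image has order prime to `p` lifts to the Witt vectors
`W(F)`, compatibly with the reduction map (the constant coefficient), and the reduction is
injective on the image of the lift. -/
theorem teichmuller_lift_of_coprime_order (p : ℕ) [Fact p.Prime]
    (F : Type*) [Field F] [Fintype F] [CharP F p]
    (G : Type*) [Group G] [Finite G]
    (ρbar : G →* (Matrix (Fin 2) (Fin 2) F)ˣ)
    (hord : Nat.Coprime (Nat.card ρbar.range) p) :
    ∃ ρ' : G →* (Matrix (Fin 2) (Fin 2) (WittVector p F))ˣ,
      (∀ g : G, ((ρ' g : Matrix (Fin 2) (Fin 2) (WittVector p F))).map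
          (WittVector.constantCoeff (p := p)) = (ρbar g : Matrix (Fin 2) (Fin 2) F)) ∧
      ∀ g₁ g₂ : G,
        ((ρ' g₁ : Matrix (Fin 2) (Fin 2) (WittVector p F))).map
            (WittVector.constantCoeff (p := p)) =
          ((ρ' g₂ : Matrix (Fin 2) (Fin 2) (WittVector p F))).map
            (WittVector.constantCoeff (p := p)) → ρ' g₁ = ρ' g₂ :=
  teichmuller_lift_of_coprime_order_general p F G ρbar hord
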